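/- arXiv:2410.10104 — 8 statements merged into one kernel-verified Lean document; each statement's English description precedes it below -/
import Mathlib

section
/- Let a₁₀, a₀₁ ∈ ℝ. If the polynomial a₁₀·P + a₀₁·Q ∈ ℝ[x,y] has total degree at most 2, then a₁₀ = 0. (Consequently, any exponential factor of the system of the form exp(a₀₀ + a₁₀x + a₀₁y), whose cofactor must be a polynomial of degree at most 2, satisfies a₁₀ = 0.) -/
open MvPolynomial

/-
The system is cubic only through `P`, whose cubic part is `-x²(x + A y)`, while `Q` is
quadratic. Hence the coefficient of `x³` in `a₁₀ P + a₀₁ Q` is `-a₁₀`, and it must vanish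
when the total degree is at most `2`.
-/

section

variable {R σ : Type*} [CommRing R]

theorem coeff_single_three_C_mul_X_pow_three_add {i j : σ} (hij : i ≠ j) (a b c : R) (r : MvPolynomial σ R) :
    coeff (Finsupp.single i 3) (C a * X i ^ 3 + X j * r + C b * X i ^ 2 + C c * X i) = a := by
  classical
  simp [coeff_X_pow, coeff_X, coeff_X_mul', hij.symm, coeff_C_mul, Finsupp.single_eq_single_iff]

theorem coeff_single_eq_zero_of_totalDegree_le_two {p : MvPolynomial σ R} (i : σ)
    (hp : p.totalDegree ≤ 2) : coeff (Finsupp.single i 3) p = 0 :=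
  coeff_eq_zero_of_totalDegree_lt (by simp; omega)

end

theorem C_mul_P_add_C_mul_Q_eq_cube_add (A B C' a₁₀ a₀₁ : ℝ) :
    (C a₁₀ * (X 0 * (C C' + X 0) * (1 - X 0 - C A * X 1))
      + C a₀₁ * (C B * X 1 * (C C' + X 0 - X 1)) : MvPolynomial (Fin 2) ℝ)
      = C (-a₁₀) * X 0 ^ 3
        + X 1 * (C (-a₁₀ * A) * X 0 ^ 2 + C (a₀₁ * B - a₁₀ * A * C') * X 0
          - C (a₀₁ * B) * X 1 + C (a₀₁ * B * C'))
        + C (a₁₀ - a₁₀ * C') * X 0 ^ 2 + C (a₁₀ * C') * X 0 := by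
  simp only [map_neg, map_mul, map_sub]
  ring

theorem stmt_3_general (A B C : ℝ)
    (a₁₀ a₀₁ : ℝ) :
    let x : MvPolynomial (Fin 2) ℝ := X 0
    let y : MvPolynomial (Fin 2) ℝ := X 1
    let P : MvPolynomial (Fin 2) ℝ := x * (MvPolynomial.C C + x) * (1 - x - MvPolynomial.C A * y)
    let Q : MvPolynomial (Fin 2) ℝ := MvPolynomial.C B * y * (MvPolynomial.C C + x - y)
    (MvPolynomial.C a₁₀ * P + MvPolynomial.C a₀₁ * Q).totalDegree ≤ 2 → a₁₀ = 0 := by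
  intro x y P Q h
  have hcube := coeff_single_eq_zero_of_totalDegree_le_two 0 h
  rw [C_mul_P_add_C_mul_Q_eq_cube_add, coeff_single_three_C_mul_X_pow_three_add (by decide)] at hcube
  exact neg_eq_zero.mp hcube

/-- If `a₁₀·P + a₀₁·Q` has total degree at most `2`, where
`P = x(C+x)(1−x−Ay)` and `Q = B·y·(C+x−y)`, then `a₁₀ = 0`.
(Hence any exponential factor `exp(a₀₀ + a₁₀x + a₀₁y)`, whose cofactor has
degree at most `2`, satisfies `a₁₀ = 0`.) -/
theorem stmt_3 (A B C : ℝ) (hA : 0 < A) (hB : 0 < B) (hC : 0 < C)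
    (a₁₀ a₀₁ : ℝ) :
    let x : MvPolynomial (Fin 2) ℝ := X 0
    let y : MvPolynomial (Fin 2) ℝ := X 1
    let P : MvPolynomial (Fin 2) ℝ := x * (MvPolynomial.C C + x) * (1 - x - MvPolynomial.C A * y)
    let Q : MvPolynomial (Fin 2) ℝ := MvPolynomial.C B * y * (MvPolynomial.C C + x - y)
    (MvPolynomial.C a₁₀ * P + MvPolynomial.C a₀₁ * Q).totalDegree ≤ 2 → a₁₀ = 0 :=
  stmt_3_general A B C a₁₀ a₀₁
end

section
/- Let a₀₁, a₂₀, a₁₁, a₀₂ ∈ ℝ. If the polynomial (2·a₂₀·x + a₁₁·y)·P + (a₀₁ + a₁₁·x + 2·a₀₂·y)·Q ∈ ℝ[x,y] has total degree at most 2, then a₂₀ = a₁₁ = a₀₂ = 0. (Consequently, any exponential factor of the form exp(a₀₀ + a₀₁y + a₂₀x² + a₁₁xy + a₀₂y²) reduces to exp(a₀₀ + a₀₁y), so the system admits no exponential factor with a genuinely quadratic exponent.) -/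
/-!
Only the top-degree terms matter. The quartic part of the cofactor is
`-(2a₂₀x + a₁₁y) · x²(x + Ay)`, and the only `y³` term is `-2Ba₀₂y³`, coming from `2a₀₂y · Q`.
A cofactor of degree at most two has vanishing coefficients at `x⁴`, `x²y²` and `y³`, which
gives `a₂₀ = 0`, `Aa₁₁ = 0` and `Ba₀₂ = 0`.
-/

open MvPolynomial

noncomputable abbrev bideg (i j : ℕ) : Fin 2 →₀ ℕ := Finsupp.single 0 i + Finsupp.single 1 j

lemma bideg_inj {i j k l : ℕ} : bideg i j = bideg k l ↔ i = k ∧ j = l := by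
  simp [Finsupp.ext_iff, Fin.forall_fin_two]

lemma coeff_bideg_eq_zero_of_totalDegree_le {R : Type*} [CommSemiring R]
    {p : MvPolynomial (Fin 2) R} {n i j : ℕ} (hp : p.totalDegree ≤ n) (hij : n < i + j) :
    coeff (bideg i j) p = 0 := by
  apply coeff_eq_zero_of_totalDegree_lt
  rw [← Finsupp.degree_apply, map_add, Finsupp.degree_single, Finsupp.degree_single]
  omega

lemma coeff_bideg_C_mul_X_pow_mul_X_pow {R : Type*} [CommSemiring R] (c : R) (i j k l : ℕ) :
    coeff (bideg i j) (C c * X 0 ^ k * X 1 ^ l) = if k = i ∧ l = j then c else 0 := by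
  rw [X_pow_eq_monomial, X_pow_eq_monomial, C_mul_monomial, monomial_mul, coeff_monomial]
  simp only [mul_one, bideg_inj]

/-- `P ∂g/∂x + Q ∂g/∂y` for `g = a₀₁ y + a₂₀ x² + a₁₁ x y + a₀₂ y²`, with `P`, `Q` the
components of the vector field. -/
noncomputable def cofactor (A B C a₀₁ a₂₀ a₁₁ a₀₂ : ℝ) : MvPolynomial (Fin 2) ℝ :=
  (MvPolynomial.C (2 * a₂₀) * X 0 + MvPolynomial.C a₁₁ * X 1) *
      (X 0 * (MvPolynomial.C C + X 0) * (1 - X 0 - MvPolynomial.C A * X 1)) +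
    (MvPolynomial.C a₀₁ + MvPolynomial.C a₁₁ * X 0 + MvPolynomial.C (2 * a₀₂) * X 1) *
      (MvPolynomial.C B * X 1 * (MvPolynomial.C C + X 0 - X 1))

section
variable (A B C a₀₁ a₂₀ a₁₁ a₀₂ : ℝ)

lemma cofactor_eq :
    cofactor A B C a₀₁ a₂₀ a₁₁ a₀₂ =
      MvPolynomial.C (a₀₁ * B * C) * X 0 ^ 0 * X 1 ^ 1 +
      MvPolynomial.C (2 * a₂₀ * C) * X 0 ^ 2 * X 1 ^ 0 +
      MvPolynomial.C (a₁₁ * C + a₀₁ * B + a₁₁ * B * C) * X 0 ^ 1 * X 1 ^ 1 +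
      MvPolynomial.C (2 * a₀₂ * B * C - a₀₁ * B) * X 0 ^ 0 * X 1 ^ 2 +
      MvPolynomial.C (2 * a₂₀ * (1 - C)) * X 0 ^ 3 * X 1 ^ 0 +
      MvPolynomial.C (a₁₁ * (1 - C + B) - 2 * a₂₀ * A * C) * X 0 ^ 2 * X 1 ^ 1 +
      MvPolynomial.C (2 * a₀₂ * B - a₁₁ * (A * C + B)) * X 0 ^ 1 * X 1 ^ 2 +
      MvPolynomial.C (-(2 * a₀₂ * B)) * X 0 ^ 0 * X 1 ^ 3 +
      MvPolynomial.C (-(2 * a₂₀)) * X 0 ^ 4 * X 1 ^ 0 +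
      MvPolynomial.C (-(2 * a₂₀ * A + a₁₁)) * X 0 ^ 3 * X 1 ^ 1 +
      MvPolynomial.C (-(a₁₁ * A)) * X 0 ^ 2 * X 1 ^ 2 := by
  simp only [cofactor, map_mul, map_add, map_sub, map_neg, map_ofNat, map_one]
  ring

lemma coeff_x4_cofactor : coeff (bideg 4 0) (cofactor A B C a₀₁ a₂₀ a₁₁ a₀₂) = -(2 * a₂₀) := by
  simp only [cofactor_eq, coeff_add, coeff_bideg_C_mul_X_pow_mul_X_pow]
  norm_num

lemma coeff_x2y2_cofactor :
    coeff (bideg 2 2) (cofactor A B C a₀₁ a₂₀ a₁₁ a₀₂) = -(a₁₁ * A) := by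
  simp only [cofactor_eq, coeff_add, coeff_bideg_C_mul_X_pow_mul_X_pow]
  norm_num

lemma coeff_y3_cofactor : coeff (bideg 0 3) (cofactor A B C a₀₁ a₂₀ a₁₁ a₀₂) = -(2 * a₀₂ * B) := by
  simp only [cofactor_eq, coeff_add, coeff_bideg_C_mul_X_pow_mul_X_pow]
  norm_num

end

theorem stmt_4_general (A B C : ℝ) (hA : 0 < A) (hB : 0 < B)
    (a₀₁ a₂₀ a₁₁ a₀₂ : ℝ) :
    let x : MvPolynomial (Fin 2) ℝ := X 0
    let y : MvPolynomial (Fin 2) ℝ := X 1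
    let P : MvPolynomial (Fin 2) ℝ := x * (MvPolynomial.C C + x) * (1 - x - MvPolynomial.C A * y)
    let Q : MvPolynomial (Fin 2) ℝ := MvPolynomial.C B * y * (MvPolynomial.C C + x - y)
    ((MvPolynomial.C (2 * a₂₀) * x + MvPolynomial.C a₁₁ * y) * P +
      (MvPolynomial.C a₀₁ + MvPolynomial.C a₁₁ * x + MvPolynomial.C (2 * a₀₂) * y) * Q).totalDegree ≤ 2 →
    a₂₀ = 0 ∧ a₁₁ = 0 ∧ a₀₂ = 0 := by
  intro x y P Q hdeg
  change (cofactor A B C a₀₁ a₂₀ a₁₁ a₀₂).totalDegree ≤ 2 at hdeg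
  have h40 := coeff_bideg_eq_zero_of_totalDegree_le (i := 4) (j := 0) hdeg (by norm_num)
  have h22 := coeff_bideg_eq_zero_of_totalDegree_le (i := 2) (j := 2) hdeg (by norm_num)
  have h03 := coeff_bideg_eq_zero_of_totalDegree_le (i := 0) (j := 3) hdeg (by norm_num)
  rw [coeff_x4_cofactor, neg_eq_zero, mul_eq_zero] at h40
  rw [coeff_x2y2_cofactor, neg_eq_zero, mul_eq_zero] at h22
  rw [coeff_y3_cofactor, neg_eq_zero, mul_eq_zero, mul_eq_zero] at h03
  exact ⟨h40.resolve_left two_ne_zero, h22.resolve_right hA.ne',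
    (h03.resolve_right hB.ne').resolve_left two_ne_zero⟩

/-- If `(2a₂₀x + a₁₁y)·P + (a₀₁ + a₁₁x + 2a₀₂y)·Q` has total degree at most
`2`, where `P = x(C+x)(1−x−Ay)` and `Q = B·y·(C+x−y)`, then
`a₂₀ = a₁₁ = a₀₂ = 0`. (Hence any exponential factor
`exp(a₀₀ + a₀₁y + a₂₀x² + a₁₁xy + a₀₂y²)` reduces to `exp(a₀₀ + a₀₁y)`.) -/
theorem stmt_4 (A B C : ℝ) (hA : 0 < A) (hB : 0 < B) (hC : 0 < C)
    (a₀₁ a₂₀ a₁₁ a₀₂ : ℝ) :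
    let x : MvPolynomial (Fin 2) ℝ := X 0
    let y : MvPolynomial (Fin 2) ℝ := X 1
    let P : MvPolynomial (Fin 2) ℝ := x * (MvPolynomial.C C + x) * (1 - x - MvPolynomial.C A * y)
    let Q : MvPolynomial (Fin 2) ℝ := MvPolynomial.C B * y * (MvPolynomial.C C + x - y)
    ((MvPolynomial.C (2 * a₂₀) * x + MvPolynomial.C a₁₁ * y) * P +
      (MvPolynomial.C a₀₁ + MvPolynomial.C a₁₁ * x + MvPolynomial.C (2 * a₀₂) * y) * Q).totalDegree ≤ 2 →
    a₂₀ = 0 ∧ a₁₁ = 0 ∧ a₀₂ = 0 :=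
  stmt_4_general A B C hA hB a₀₁ a₂₀ a₁₁ a₀₂
end

section
/- The four polynomials K₁(x,y) = (C+x)(1−x−Ay), K₂(x,y) = x(1−x−Ay), K₃(x,y) = B(C+x−y), and K₄(x,y) = B·y·(C+x−y) are linearly independent over ℝ: if λ₁K₁ + λ₂K₂ + λ₃K₃ + λ₄K₄ = 0 as a polynomial identity with λ₁, λ₂, λ₃, λ₄ ∈ ℝ, then λ₁ = λ₂ = λ₃ = λ₄ = 0. (Hence the system admits no Darboux first integral built from the invariant curves x = 0, x + C = 0, y = 0 and the exponential factor exp(a₀₀ + a₀₁y).) -/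
/-- The cofactors `K₁ = (C+x)(1−x−Ay)`, `K₂ = x(1−x−Ay)`, `K₃ = B(C+x−y)`,
`K₄ = B·y·(C+x−y)` are linearly independent over `ℝ` as polynomials in
`x, y`: if `λ₁K₁ + λ₂K₂ + λ₃K₃ + λ₄K₄ = 0` identically then
`λ₁ = λ₂ = λ₃ = λ₄ = 0`. -/
theorem stmt_5 (A B C : ℝ) (hA : 0 < A) (hB : 0 < B) (hC : 0 < C)
    (l₁ l₂ l₃ l₄ : ℝ)
    (h : ∀ x y : ℝ,
      l₁ * ((C + x) * (1 - x - A * y)) + l₂ * (x * (1 - x - A * y)) +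
        l₃ * (B * (C + x - y)) + l₄ * (B * y * (C + x - y)) = 0) :
    l₁ = 0 ∧ l₂ = 0 ∧ l₃ = 0 ∧ l₄ = 0 := by
  have e1 := h 0 0
  have e2 := h 1 0
  have e3 := h (-1) 0
  have e4 := h 0 1
  have e5 := h 0 (-1)
  have h02 : B * l₄ = 0 := by linear_combination (-1/2) * (e4 + e5 - 2 * e1)
  have hl4 : l₄ = 0 := by
    rcases mul_eq_zero.mp h02 with hb | h
    · exact absurd hb (ne_of_gt hB)
    · exact h
  have h20 : l₁ + l₂ = 0 := by linear_combination (-1/2) * (e2 + e3 - 2 * e1)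
  have h00 : l₁ + B * l₃ = 0 := by
    have hc : C * (l₁ + B * l₃) = 0 := by linear_combination e1
    rcases mul_eq_zero.mp hc with hc' | h
    · exact absurd hc' (ne_of_gt hC)
    · exact h
  have h10 : l₁ * (1 - C) + l₂ + B * l₃ = 0 := by linear_combination (1/2) * (e2 - e3)
  have hl3 : l₃ = 0 := by
    have key : B * l₃ * (C + 1) = 0 := by linear_combination h10 - h20 + C * h00
    rcases mul_eq_zero.mp key with hk | hk
    · rcases mul_eq_zero.mp hk with hb | h
      · exact absurd hb (ne_of_gt hB)
      · exact h
    · linarith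
  have hl1 : l₁ = 0 := by
    have := h00; rw [hl3] at this; linarith
  exact ⟨hl1, by linarith, hl3, hl4⟩
end

section
/- Let div := ∂P/∂x + ∂Q/∂y = (1+B)C − (2B+AC)y + (2+B−2C)x − 3x² − 2Axy be the divergence of the vector field. There exist no real numbers λ₁, λ₂, λ₃, λ₄ such that λ₁K₁ + λ₂K₂ + λ₃K₃ + λ₄K₄ + div = 0 as a polynomial identity, where K₁(x,y) = (C+x)(1−x−Ay), K₂(x,y) = x(1−x−Ay), K₃(x,y) = B(C+x−y), K₄(x,y) = B·y·(C+x−y). (Hence the system admits no Darboux integrating factor built from these cofactors.) -/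
/-! Comparing the coefficients of `x²`, `xy` and `y²` in the identity gives
`λ₁ + λ₂ = -3`, `B λ₄ = 0` and `-A (λ₁ + λ₂) + B λ₄ - 2A = 0`, which together force `A = 0`. -/

theorem quadratic_coeffs_eq_zero_of_forall_eq_zero {a b c d e f : ℝ}
    (h : ∀ x y : ℝ, a + b * x + c * y + d * x ^ 2 + e * x * y + f * y ^ 2 = 0) :
    a = 0 ∧ b = 0 ∧ c = 0 ∧ d = 0 ∧ e = 0 ∧ f = 0 := by
  refine ⟨?_, ?_, ?_, ?_, ?_, ?_⟩
  · linear_combination h 0 0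
  · linear_combination (h 1 0 - h (-1) 0) / 2
  · linear_combination (h 0 1 - h 0 (-1)) / 2
  · linear_combination (h 1 0 + h (-1) 0) / 2 - h 0 0
  · linear_combination h 1 1 - h 1 0 - h 0 1 + h 0 0
  · linear_combination (h 0 1 + h 0 (-1)) / 2 - h 0 0

theorem stmt_6_general (A B C : ℝ) (hA : 0 < A) :
    ¬ ∃ l₁ l₂ l₃ l₄ : ℝ, ∀ x y : ℝ,
      l₁ * ((C + x) * (1 - x - A * y)) + l₂ * (x * (1 - x - A * y)) +
        l₃ * (B * (C + x - y)) + l₄ * (B * y * (C + x - y)) +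
        ((1 + B) * C - (2 * B + A * C) * y + (2 + B - 2 * C) * x
          - 3 * x ^ 2 - 2 * A * x * y) = 0 := by
  rintro ⟨l₁, l₂, l₃, l₄, h⟩
  obtain ⟨-, -, -, hx2, hxy, hy2⟩ := quadratic_coeffs_eq_zero_of_forall_eq_zero
    (a := l₁ * C + l₃ * B * C + (1 + B) * C)
    (b := l₁ * (1 - C) + l₂ + l₃ * B + (2 + B - 2 * C))
    (c := -l₁ * A * C - l₃ * B + l₄ * B * C - (2 * B + A * C))
    (d := -l₁ - l₂ - 3) (e := -A * l₁ - A * l₂ + B * l₄ - 2 * A) (f := -B * l₄)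
    fun x y => by linear_combination h x y
  exact hA.ne' (by linear_combination hxy - A * hx2 + hy2)

/-- There is no linear combination of the cofactors
`K₁ = (C+x)(1−x−Ay)`, `K₂ = x(1−x−Ay)`, `K₃ = B(C+x−y)`, `K₄ = B·y·(C+x−y)`
equal to minus the divergence
`div = (1+B)C − (2B+AC)y + (2+B−2C)x − 3x² − 2Axy` of the vector field;
i.e. no reals `λ₁, λ₂, λ₃, λ₄` satisfy `λ₁K₁ + λ₂K₂ + λ₃K₃ + λ₄K₄ + div = 0`
identically. (Hence no Darboux integrating factor from these cofactors.) -/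
theorem stmt_6 (A B C : ℝ) (hA : 0 < A) (hB : 0 < B) (hC : 0 < C) :
    ¬ ∃ l₁ l₂ l₃ l₄ : ℝ, ∀ x y : ℝ,
      l₁ * ((C + x) * (1 - x - A * y)) + l₂ * (x * (1 - x - A * y)) +
        l₃ * (B * (C + x - y)) + l₄ * (B * y * (C + x - y)) +
        ((1 + B) * C - (2 * B + A * C) * y + (2 + B - 2 * C) * x
          - 3 * x ^ 2 - 2 * A * x * y) = 0 :=
  stmt_6_general A B C hA
end

section
/- The set Ω̃ = {(x,y) ∈ ℝ² : 0 ≤ x ≤ 1, y ≥ 0} is positively invariant for the system: every solution (x(t), y(t)) with initial condition (x(0), y(0)) ∈ Ω̃ satisfies (x(t), y(t)) ∈ Ω̃ for all t ≥ 0 in its interval of definition. -/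
/-!
Along a solution, each of `x`, `y` and `1 - x` satisfies a linear equation `f' = a f + b` with
continuous `a` and `b ≥ 0`:
`x' = [(C + x)(1 - x - A y)] x`, `y' = [B (C + x - y)] y` and, once `x, y ≥ 0` are known,
`(1 - x)' = [-x (C + x)] (1 - x) + A x (C + x) y`.
Multiplying by the integrating factor `exp (-∫ a)` turns such an equation into
`(f exp (-∫ a))' = b exp (-∫ a) ≥ 0`, so `f` stays nonnegative if it starts nonnegative.
-/

open Set

theorem ContinuousOn.hasDerivWithinAt_integral_Icc {E : Type*} [NormedAddCommGroup E]
    [NormedSpace ℝ E] [CompleteSpace E] {a : ℝ → E} {t₀ t₁ s : ℝ}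
    (ha : ContinuousOn a (Icc t₀ t₁)) (hs : s ∈ Icc t₀ t₁) :
    HasDerivWithinAt (fun u => ∫ r in t₀..u, a r) (a s) (Icc t₀ t₁) s := by
  have : Fact (s ∈ Icc t₀ t₁) := ⟨hs⟩
  exact intervalIntegral.integral_hasDerivWithinAt_right
    ((ha.mono (uIcc_of_le hs.1 ▸ Icc_subset_Icc_right hs.2)).intervalIntegrable)
    ⟨Icc t₀ t₁, self_mem_nhdsWithin, ha.aestronglyMeasurable measurableSet_Icc⟩ (ha s hs)

theorem nonneg_of_hasDerivWithinAt_mul_add {f a b : ℝ → ℝ} {t₀ t₁ : ℝ}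
    (ha : ContinuousOn a (Icc t₀ t₁)) (hb : ∀ s ∈ Icc t₀ t₁, 0 ≤ b s)
    (hf : ∀ s ∈ Icc t₀ t₁, HasDerivWithinAt f (a s * f s + b s) (Icc t₀ t₁) s)
    (h₀ : 0 ≤ f t₀) : ∀ s ∈ Icc t₀ t₁, 0 ≤ f s := by
  set G := fun u => ∫ r in t₀..u, a r
  set F := fun u => f u * Real.exp (-G u)
  have hF : ∀ s ∈ Icc t₀ t₁, HasDerivWithinAt F (b s * Real.exp (-G s)) (Icc t₀ t₁) s :=
    fun s hs =>
      ((hf s hs).mul (ha.hasDerivWithinAt_integral_Icc hs).fun_neg.exp).congr_deriv (by ring)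
  have hF_mono : MonotoneOn F (Icc t₀ t₁) := by
    refine monotoneOn_of_hasDerivWithinAt_nonneg (f' := fun s => b s * Real.exp (-G s))
      (convex_Icc t₀ t₁) (fun s hs => (hF s hs).continuousWithinAt) (fun s hs => ?_)
      (fun s hs => ?_)
    · rw [interior_Icc] at hs ⊢
      exact (hF s (Ioo_subset_Icc_self hs)).mono Ioo_subset_Icc_self
    · rw [interior_Icc] at hs
      exact mul_nonneg (hb s (Ioo_subset_Icc_self hs)) (Real.exp_pos _).le
  intro s hs
  have hF₀ : 0 ≤ F t₀ := mul_nonneg h₀ (Real.exp_pos _).le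
  have hFs : 0 ≤ F s := hF₀.trans (hF_mono (left_mem_Icc.2 (hs.1.trans hs.2)) hs hs.1)
  exact (mul_nonneg_iff_of_pos_right (Real.exp_pos _)).1 hFs

theorem stmt_7_general (A B C : ℝ) (hA : 0 < A) (hC : 0 < C)
    (I : Set ℝ) (hI : I.OrdConnected) (h0 : (0 : ℝ) ∈ I) (x y : ℝ → ℝ)
    (hx : ∀ t ∈ I, HasDerivAt x ((x t) * (C + x t) * (1 - x t - A * y t)) t)
    (hy : ∀ t ∈ I, HasDerivAt y (B * (y t) * (C + x t - y t)) t)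
    (hx0 : 0 ≤ x 0) (hx1 : x 0 ≤ 1) (hy0 : 0 ≤ y 0) :
    ∀ t ∈ I, 0 ≤ t → 0 ≤ x t ∧ x t ≤ 1 ∧ 0 ≤ y t := by
  intro t ht ht₀
  have hsub : Icc 0 t ⊆ I := hI.out h0 ht
  have hx' (s) (hs : s ∈ Icc 0 t) := (hx s (hsub hs)).hasDerivWithinAt (s := Icc 0 t)
  have hy' (s) (hs : s ∈ Icc 0 t) := (hy s (hsub hs)).hasDerivWithinAt (s := Icc 0 t)
  have hxc : ContinuousOn x (Icc 0 t) := fun s hs => (hx' s hs).continuousWithinAt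
  have hyc : ContinuousOn y (Icc 0 t) := fun s hs => (hy' s hs).continuousWithinAt
  have hx_nonneg : ∀ s ∈ Icc 0 t, 0 ≤ x s :=
    nonneg_of_hasDerivWithinAt_mul_add (a := fun s => (C + x s) * (1 - x s - A * y s))
      (b := 0) (by fun_prop) (fun _ _ => le_rfl)
      (fun s hs => (hx' s hs).congr_deriv (by simp only [Pi.zero_apply]; ring)) hx0
  have hy_nonneg : ∀ s ∈ Icc 0 t, 0 ≤ y s :=
    nonneg_of_hasDerivWithinAt_mul_add (a := fun s => B * (C + x s - y s))
      (b := 0) (by fun_prop) (fun _ _ => le_rfl)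
      (fun s hs => (hy' s hs).congr_deriv (by simp only [Pi.zero_apply]; ring)) hy0
  have hx_le_one : ∀ s ∈ Icc 0 t, 0 ≤ 1 - x s :=
    nonneg_of_hasDerivWithinAt_mul_add (f := fun s => 1 - x s)
      (a := fun s => -(x s * (C + x s))) (b := fun s => A * (x s * (C + x s) * y s))
      (by fun_prop)
      (fun s hs => by have := hx_nonneg s hs; have := hy_nonneg s hs; positivity)
      (fun s hs => ((hx' s hs).const_sub 1).congr_deriv (by ring)) (by linarith)
  have ht_mem : t ∈ Icc 0 t := right_mem_Icc.2 ht₀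
  exact ⟨hx_nonneg t ht_mem, by linarith [hx_le_one t ht_mem], hy_nonneg t ht_mem⟩

/-- The region `Ω̃ = {(x,y) : 0 ≤ x ≤ 1, 0 ≤ y}` is positively invariant for
the system `ẋ = x(C+x)(1−x−Ay)`, `ẏ = B·y·(C+x−y)`: any solution starting in
`Ω̃` at time `0` stays in `Ω̃` for all `t ≥ 0` in its interval of definition. -/
theorem stmt_7 (A B C : ℝ) (hA : 0 < A) (hB : 0 < B) (hC : 0 < C)
    (I : Set ℝ) (hI : I.OrdConnected) (h0 : (0 : ℝ) ∈ I) (x y : ℝ → ℝ)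
    (hx : ∀ t ∈ I, HasDerivAt x ((x t) * (C + x t) * (1 - x t - A * y t)) t)
    (hy : ∀ t ∈ I, HasDerivAt y (B * (y t) * (C + x t - y t)) t)
    (hx0 : 0 ≤ x 0) (hx1 : x 0 ≤ 1) (hy0 : 0 ≤ y 0) :
    ∀ t ∈ I, 0 ≤ t → 0 ≤ x t ∧ x t ≤ 1 ∧ 0 ≤ y t :=
  stmt_7_general A B C hA hC I hI h0 x y hx hy hx0 hx1 hy0
end

section
/- Assume 1 − AC ≤ 0. The equilibrium points of the system in the closed first quadrant {(x,y) : x ≥ 0, y ≥ 0} are exactly the three points E₀ = (0,0), E₁ = (0,C), and E₂ = (1,0); in particular there is no equilibrium in the open first quadrant {x > 0, y > 0}. -/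
theorem prey_rate_eq_zero_iff {A C x y : ℝ} (hCx : 0 < C + x) :
    x * (C + x) * (1 - x - A * y) = 0 ↔ x = 0 ∨ x + A * y = 1 := by
  simp only [mul_eq_zero, hCx.ne', or_false, sub_sub, sub_eq_zero, eq_comm (a := (1 : ℝ))]

theorem predator_rate_eq_zero_iff {B C x y : ℝ} (hB : B ≠ 0) :
    B * y * (C + x - y) = 0 ↔ y = 0 ∨ y = C + x := by
  simp only [mul_eq_zero, hB, false_or, sub_eq_zero, eq_comm (a := C + x)]

/-- The hypothesis rearranges to `x (1 + A) = 1 - A C ≤ 0`. -/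
theorem eq_zero_of_nullclines_meet {A C x : ℝ} (hA : 0 < A) (hAC : 1 - A * C ≤ 0)
    (hx : 0 ≤ x) (h : x + A * (C + x) = 1) : x = 0 := by
  nlinarith [mul_nonneg hA.le hx]

theorem equilibrium_iff {A B C x y : ℝ} (hA : 0 < A) (hB : 0 < B) (hC : 0 < C)
    (hAC : 1 - A * C ≤ 0) (hx : 0 ≤ x) :
    (x * (C + x) * (1 - x - A * y) = 0 ∧ B * y * (C + x - y) = 0) ↔
      ((x, y) = ((0 : ℝ), (0 : ℝ)) ∨ (x, y) = ((0 : ℝ), C) ∨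
        (x, y) = ((1 : ℝ), (0 : ℝ))) := by
  rw [prey_rate_eq_zero_iff (by linarith), predator_rate_eq_zero_iff hB.ne']
  constructor
  · rintro ⟨rfl | hprey, rfl | rfl⟩
    · simp
    · simp
    · simp_all
    · obtain rfl := eq_zero_of_nullclines_meet hA hAC hx hprey
      simp
  · rintro (h | h | h) <;> simp_all

/-- When `1 − AC ≤ 0`, the equilibria of `ẋ = x(C+x)(1−x−Ay)`,
`ẏ = B·y·(C+x−y)` in the closed first quadrant are exactly
`(0,0)`, `(0,C)` and `(1,0)`; in particular there is no equilibrium in the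
open first quadrant. -/
theorem stmt_9 (A B C : ℝ) (hA : 0 < A) (hB : 0 < B) (hC : 0 < C)
    (hAC : 1 - A * C ≤ 0) :
    (∀ x y : ℝ, 0 ≤ x → 0 ≤ y →
      ((x * (C + x) * (1 - x - A * y) = 0 ∧ B * y * (C + x - y) = 0) ↔
        ((x, y) = ((0 : ℝ), (0 : ℝ)) ∨ (x, y) = ((0 : ℝ), C) ∨
          (x, y) = ((1 : ℝ), (0 : ℝ))))) ∧
    (∀ x y : ℝ, 0 < x → 0 < y →
      ¬ (x * (C + x) * (1 - x - A * y) = 0 ∧ B * y * (C + x - y) = 0)) := by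
  refine ⟨fun x y hx _ ↦ equilibrium_iff hA hB hC hAC hx, fun x y hx hy h ↦ ?_⟩
  rcases (equilibrium_iff hA hB hC hAC hx.le).mp h with h | h | h <;>
    simp only [Prod.mk.injEq] at h <;> linarith [h.1, h.2]
end

section
/- Assume 1 − AC > 0 and let E* = ((1−AC)/(1+A), (1+C)/(1+A)). The Jacobian matrix J(E*) of the system at E* equals [[(1+C)(−1+AC)/(1+A)², A(1+C)(−1+AC)/(1+A)²], [B(1+C)/(1+A), −B(1+C)/(1+A)]]; its determinant is det J(E*) = B(1+C)²(1−AC)/(1+A)² > 0 and its trace is trace J(E*) = (1+C)(−1−(1+A)B+AC)/(1+A)² < 0. Consequently both eigenvalues of J(E*) have strictly negative real part, so E* is a locally asymptotically stable (attracting) equilibrium. -/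
/-! A real `2 × 2` matrix has characteristic polynomial `X² - t X + d` with `t` its trace
and `d` its determinant; for a complex root `z = x + iy` the real and imaginary parts of
`z² - t z + d = 0` combine to `x (x² + y² + d) = t (x² + y²)`, so `t < 0 < d` forces `x < 0`. -/

open Polynomial

theorem Complex.re_neg_of_sq_sub_mul_add_eq_zero {t d : ℝ} (ht : t < 0) (hd : 0 < d) {z : ℂ}
    (hz : z ^ 2 - t * z + d = 0) : z.re < 0 := by
  have hre : z.re ^ 2 - z.im ^ 2 - t * z.re + d = 0 := by
    simpa [pow_two] using congrArg Complex.re hz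
  have him : 2 * z.re * z.im - t * z.im = 0 := by
    have := congrArg Complex.im hz
    simp [pow_two] at this
    linarith
  have key : z.re * (z.re ^ 2 + z.im ^ 2 + d) = t * (z.re ^ 2 + z.im ^ 2) := by
    linear_combination z.re * hre + z.im * him
  by_contra! hnonneg
  have hnormSq : z.re ^ 2 + z.im ^ 2 = 0 := by
    nlinarith [sq_nonneg z.re, sq_nonneg z.im,
      mul_nonneg hnonneg (by positivity : 0 ≤ z.re ^ 2 + z.im ^ 2 + d)]
  have hre0 : z.re = 0 := by nlinarith [sq_nonneg z.re, sq_nonneg z.im]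
  have him0 : z.im = 0 := by nlinarith [sq_nonneg z.re, sq_nonneg z.im]
  rw [hre0, him0] at hre
  linarith

theorem Matrix.re_neg_of_isRoot_charpoly_map {n : Type*} [Fintype n] [DecidableEq n]
    (hn : Fintype.card n = 2) (M : Matrix n n ℝ) (htr : M.trace < 0) (hdet : 0 < M.det) {z : ℂ}
    (hz : (M.charpoly.map (algebraMap ℝ ℂ)).IsRoot z) : z.re < 0 := by
  rw [M.charpoly_of_card_eq_two hn] at hz
  refine Complex.re_neg_of_sq_sub_mul_add_eq_zero htr hdet ?_
  simpa [IsRoot, Complex.coe_algebraMap] using hz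

def jacobian (A B C x y : ℝ) : Matrix (Fin 2) (Fin 2) ℝ :=
  !![x * (2 - 3 * x - 2 * A * y) - C * (-1 + 2 * x + A * y), -A * x * (C + x);
     B * y, B * (C + x - 2 * y)]

theorem jacobian_coexistence (A B C : ℝ) (hA : 1 + A ≠ 0) :
    jacobian A B C ((1 - A * C) / (1 + A)) ((1 + C) / (1 + A)) =
      !![(1 + C) * (-1 + A * C) / (1 + A) ^ 2, A * (1 + C) * (-1 + A * C) / (1 + A) ^ 2;
         B * (1 + C) / (1 + A), -(B * (1 + C) / (1 + A))] := by
  ext i j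
  fin_cases i <;> fin_cases j <;> simp [jacobian] <;> field_simp <;> ring

/-- For `1 − AC > 0`, at the coexistence equilibrium
`E* = ((1−AC)/(1+A), (1+C)/(1+A))` the Jacobian matrix equals
`[[(1+C)(−1+AC)/(1+A)², A(1+C)(−1+AC)/(1+A)²], [B(1+C)/(1+A), −B(1+C)/(1+A)]]`,
with determinant `B(1+C)²(1−AC)/(1+A)² > 0` and trace
`(1+C)(−1−(1+A)B+AC)/(1+A)² < 0`; hence every (complex) eigenvalue has
strictly negative real part and `E*` is locally asymptotically stable. -/
theorem stmt_13 (A B C : ℝ) (hA : 0 < A) (hB : 0 < B) (hC : 0 < C)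
    (hAC : 0 < 1 - A * C)
    (J : ℝ → ℝ → Matrix (Fin 2) (Fin 2) ℝ)
    (hJ : ∀ x y : ℝ, J x y =
      !![x * (2 - 3 * x - 2 * A * y) - C * (-1 + 2 * x + A * y), -A * x * (C + x);
         B * y, B * (C + x - 2 * y)]) :
    J ((1 - A * C) / (1 + A)) ((1 + C) / (1 + A)) =
      !![(1 + C) * (-1 + A * C) / (1 + A) ^ 2, A * (1 + C) * (-1 + A * C) / (1 + A) ^ 2;
         B * (1 + C) / (1 + A), -(B * (1 + C) / (1 + A))] ∧
    (J ((1 - A * C) / (1 + A)) ((1 + C) / (1 + A))).det =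
      B * (1 + C) ^ 2 * (1 - A * C) / (1 + A) ^ 2 ∧
    0 < B * (1 + C) ^ 2 * (1 - A * C) / (1 + A) ^ 2 ∧
    (J ((1 - A * C) / (1 + A)) ((1 + C) / (1 + A))).trace =
      (1 + C) * (-1 - (1 + A) * B + A * C) / (1 + A) ^ 2 ∧
    (1 + C) * (-1 - (1 + A) * B + A * C) / (1 + A) ^ 2 < 0 ∧
    (∀ z : ℂ,
      ((J ((1 - A * C) / (1 + A)) ((1 + C) / (1 + A))).charpoly.map
        (algebraMap ℝ ℂ)).IsRoot z → z.re < 0) := by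
  have hA1 : (1 : ℝ) + A ≠ 0 := by positivity
  have hM := (hJ _ _).trans (jacobian_coexistence A B C hA1)
  have hdet : (J ((1 - A * C) / (1 + A)) ((1 + C) / (1 + A))).det =
      B * (1 + C) ^ 2 * (1 - A * C) / (1 + A) ^ 2 := by
    rw [hM, Matrix.det_fin_two_of]
    field_simp
    ring
  have htr : (J ((1 - A * C) / (1 + A)) ((1 + C) / (1 + A))).trace =
      (1 + C) * (-1 - (1 + A) * B + A * C) / (1 + A) ^ 2 := by
    rw [hM, Matrix.trace_fin_two_of]
    field_simp
    ring
  have hdet_pos : 0 < B * (1 + C) ^ 2 * (1 - A * C) / (1 + A) ^ 2 := by positivity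
  have htr_neg : (1 + C) * (-1 - (1 + A) * B + A * C) / (1 + A) ^ 2 < 0 :=
    div_neg_of_neg_of_pos (mul_neg_of_pos_of_neg (by positivity) (by nlinarith)) (by positivity)
  refine ⟨hM, hdet, hdet_pos, htr, htr_neg, fun z hz => ?_⟩
  exact Matrix.re_neg_of_isRoot_charpoly_map (Fintype.card_fin 2) _
    (htr ▸ htr_neg) (hdet ▸ hdet_pos) hz
end

section
/- Consider the u-directional blow-up system u̇ = −u[A + u + (AC−B)w + (B+C−1)uw + C(B−1)uw²], ẇ = Aw + uw + ACw² + uw² − Cuw³, with positive real parameters A, B, C. Its equilibrium points on the line {u = 0} are exactly (0,0) and (0, −1/C). The Jacobian matrix at (0,0) has eigenvalues A > 0 and −A < 0, so (0,0) is a hyperbolic saddle; the Jacobian matrix at (0, −1/C) has eigenvalues −A < 0 and −B/C < 0, so (0, −1/C) is a hyperbolic stable node. -/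
/-!
Along `{u = 0}` the first component of the field vanishes identically and the second is
`A w (1 + C w)`, which gives the two equilibria. On `{u = 0}` the Jacobian is lower
triangular, with diagonal `-(A + (AC - B) w)` and `A + 2ACw`; these are `-A, A` at `w = 0`
and `-B/C, -A` at `w = -1/C`, and the diagonal entries of a triangular `2 × 2` map are
always eigenvalues.
-/

namespace Module.End

theorem hasEigenvalue_of_apply_eq_smul {R M : Type*} [CommRing R] [AddCommGroup M]
    [Module R M] (T : Module.End R M) {μ : R} {v : M} (hv : v ≠ 0) (h : T v = μ • v) :
    T.HasEigenvalue μ :=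
  hasEigenvalue_of_hasEigenvector ⟨mem_eigenspace_iff.mpr h, hv⟩

variable {R : Type*} [CommRing R] [Nontrivial R] (T : Module.End R (R × R))

theorem hasEigenvalue_of_apply_inr {d : R} (h : T (0, 1) = (0, d)) : T.HasEigenvalue d :=
  T.hasEigenvalue_of_apply_eq_smul (v := (0, 1)) (by simp) (by simpa using h)

theorem hasEigenvalue_of_lowerTriangular {a d : R} (h₁ : (T (1, 0)).1 = a)
    (h₂ : T (0, 1) = (0, d)) : T.HasEigenvalue a := by
  set c := (T (1, 0)).2
  replace h₁ : T (1, 0) = (a, c) := Prod.ext h₁ rfl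
  by_cases had : a = d
  · exact had ▸ T.hasEigenvalue_of_apply_inr h₂
  -- `(a - d, c)` is an eigenvector for `a`
  have hv : ((a - d, c) : R × R) = (a - d) • (1, 0) + c • (0, 1) := by simp
  refine T.hasEigenvalue_of_apply_eq_smul (v := (a - d, c)) (by simp [sub_eq_zero, had]) ?_
  rw [hv, map_add, map_smul, map_smul, h₁, h₂]
  simp only [Prod.smul_mk, Prod.mk_add_mk, smul_eq_mul]
  congr 1 <;> ring

end Module.End

theorem fderiv_apply_eq_of_hasDerivAt_line {𝕜 E F : Type*} [NontriviallyNormedField 𝕜]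
    [NormedAddCommGroup E] [NormedSpace 𝕜 E] [NormedAddCommGroup F] [NormedSpace 𝕜 F]
    {f : E → F} {x v : E} {d : F} (hf : DifferentiableAt 𝕜 f x)
    (h : HasDerivAt (fun t : 𝕜 => f (x + t • v)) d 0) : fderiv 𝕜 f x v = d :=
  (hf.hasFDerivAt.hasLineDerivAt v).unique h

theorem hasDerivAt_quadratic_zero {𝕜 : Type*} [NontriviallyNormedField 𝕜] (a b c : 𝕜) :
    HasDerivAt (fun t => a + b * t + c * t ^ 2) b 0 :=
  ((((hasDerivAt_id' (0 : 𝕜)).const_mul b).const_add a).add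
    ((hasDerivAt_pow 2 (0 : 𝕜)).const_mul c)).congr_deriv (by simp)

def blowUpField (A B C : ℝ) (p : ℝ × ℝ) : ℝ × ℝ :=
  (-(p.1 * (A + p.1 + (A * C - B) * p.2 + (B + C - 1) * p.1 * p.2 + C * (B - 1) * p.1 * p.2 ^ 2)),
    A * p.2 + p.1 * p.2 + A * C * p.2 ^ 2 + p.1 * p.2 ^ 2 - C * p.1 * p.2 ^ 3)

namespace blowUpField

variable {A B C : ℝ}

theorem apply_zero_left_eq_zero_iff (hA : A ≠ 0) (hC : C ≠ 0) (w : ℝ) :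
    blowUpField A B C (0, w) = (0, 0) ↔ w = 0 ∨ w = -1 / C := by
  have hfactor : blowUpField A B C (0, w) = (0, A * w * (1 + C * w)) := by
    simp only [blowUpField]
    congr 1 <;> ring
  rw [hfactor, Prod.mk.injEq, mul_eq_zero, mul_eq_zero, eq_div_iff hC]
  constructor
  · rintro ⟨-, (hA' | hw) | hw⟩
    · exact absurd hA' hA
    · exact .inl hw
    · exact .inr (by linarith)
  · rintro (hw | hw)
    · simp [hw]
    · exact ⟨rfl, .inr (by linarith)⟩

theorem differentiable : Differentiable ℝ (blowUpField A B C) := by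
  unfold blowUpField; fun_prop

theorem fderiv_zero_left_apply_inl (w : ℝ) :
    fderiv ℝ (blowUpField A B C) (0, w) (1, 0) =
      (-(A + (A * C - B) * w), w + w ^ 2 - C * w ^ 3) := by
  refine fderiv_apply_eq_of_hasDerivAt_line differentiable.differentiableAt ?_
  have hline := (hasDerivAt_quadratic_zero 0 (-(A + (A * C - B) * w))
      (-(1 + (B + C - 1) * w + C * (B - 1) * w ^ 2))).prodMk
    (hasDerivAt_quadratic_zero (A * w + A * C * w ^ 2) (w + w ^ 2 - C * w ^ 3) 0)
  refine hline.congr_of_eventuallyEq (.of_forall fun t => ?_)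
  simp only [blowUpField, Prod.smul_mk, Prod.mk_add_mk, smul_eq_mul]
  congr 1 <;> ring

theorem fderiv_zero_left_apply_inr (w : ℝ) :
    fderiv ℝ (blowUpField A B C) (0, w) (0, 1) = (0, A + 2 * A * C * w) := by
  refine fderiv_apply_eq_of_hasDerivAt_line differentiable.differentiableAt ?_
  have hline := (hasDerivAt_quadratic_zero 0 0 0).prodMk
    (hasDerivAt_quadratic_zero (A * w + A * C * w ^ 2) (A + 2 * A * C * w) (A * C))
  refine hline.congr_of_eventuallyEq (.of_forall fun t => ?_)
  simp only [blowUpField, Prod.smul_mk, Prod.mk_add_mk, smul_eq_mul]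
  congr 1 <;> ring

end blowUpField

/-- For the u-directional blow-up system
`u̇ = −u[A + u + (AC−B)w + (B+C−1)uw + C(B−1)uw²]`,
`ẇ = Aw + uw + ACw² + uw² − Cuw³`,
the equilibria on `{u = 0}` are exactly `(0,0)` and `(0, −1/C)`; the Jacobian
at `(0,0)` has eigenvalues `A > 0` and `−A < 0` (hyperbolic saddle), and the
Jacobian at `(0, −1/C)` has eigenvalues `−A < 0` and `−B/C < 0`
(hyperbolic stable node). -/
theorem stmt_17 (A B C : ℝ) (hA : 0 < A) (hB : 0 < B) (hC : 0 < C)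
    (F : ℝ × ℝ → ℝ × ℝ)
    (hF : ∀ u w : ℝ, F (u, w) =
      (-(u * (A + u + (A * C - B) * w + (B + C - 1) * u * w + C * (B - 1) * u * w ^ 2)),
       A * w + u * w + A * C * w ^ 2 + u * w ^ 2 - C * u * w ^ 3)) :
    (∀ w : ℝ, F (0, w) = (0, 0) ↔ w = 0 ∨ w = -1 / C) ∧
    Module.End.HasEigenvalue (fderiv ℝ F (0, 0)).toLinearMap A ∧
    Module.End.HasEigenvalue (fderiv ℝ F (0, 0)).toLinearMap (-A) ∧
    0 < A ∧ -A < 0 ∧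
    Module.End.HasEigenvalue (fderiv ℝ F (0, -1 / C)).toLinearMap (-A) ∧
    Module.End.HasEigenvalue (fderiv ℝ F (0, -1 / C)).toLinearMap (-(B / C)) ∧
    -A < 0 ∧ -(B / C) < 0 := by
  obtain rfl : F = blowUpField A B C := funext fun p => hF p.1 p.2
  have inl₀ : (fderiv ℝ (blowUpField A B C) (0, 0) (1, 0)).1 = -A := by
    simp [blowUpField.fderiv_zero_left_apply_inl]
  have inr₀ : fderiv ℝ (blowUpField A B C) (0, 0) (0, 1) = (0, A) := by
    simp [blowUpField.fderiv_zero_left_apply_inr]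
  have inl₁ : (fderiv ℝ (blowUpField A B C) (0, -1 / C) (1, 0)).1 = -(B / C) := by
    simp only [blowUpField.fderiv_zero_left_apply_inl]
    field_simp
    ring
  have inr₁ : fderiv ℝ (blowUpField A B C) (0, -1 / C) (0, 1) = (0, -A) := by
    rw [blowUpField.fderiv_zero_left_apply_inr]
    congr 1
    field_simp
    ring
  refine ⟨blowUpField.apply_zero_left_eq_zero_iff hA.ne' hC.ne', ?_, ?_, hA, by linarith, ?_, ?_,
    by linarith, by linarith [div_pos hB hC]⟩
  · exact Module.End.hasEigenvalue_of_apply_inr _ inr₀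
  · exact Module.End.hasEigenvalue_of_lowerTriangular _ inl₀ inr₀
  · exact Module.End.hasEigenvalue_of_apply_inr _ inr₁
  · exact Module.End.hasEigenvalue_of_lowerTriangular _ inl₁ inr₁
end
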